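/- Let G=(V,E) be a finite graph, (𝒯,𝐓) a tree decomposition of G whose tree is rooted, and v_1,…,v_ℓ a depth-first traversal of 𝒯. Then for every i ∈ [1,ℓ], every node v ∈ Θ_i, and every edge (s,t) ∈ E: if s ∈ Ψ_{>i−1}(v) then t ∈ Ψ_{>i−1}(v) ∪ 𝐓(v), and if t ∈ Ψ_{>i−1}(v) then s ∈ Ψ_{>i−1}(v) ∪ 𝐓(v). -/

import Mathlib

universe u v

/-- A leaf of a graph: a node with at most one neighbour. -/
def IsTreeLeaf {𝒱 : Type v} (T : SimpleGraph 𝒱) (x : 𝒱) : Prop :=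
  (T.neighborSet x).Subsingleton

/-- `(T, B)` is a tree decomposition of the graph with vertex set `V` and edge
relation `E`. -/
def IsTreeDecomp {V : Type u} {𝒱 : Type v} (E : V → V → Prop) (T : SimpleGraph 𝒱)
    (B : 𝒱 → Finset V) : Prop :=
  T.IsTree ∧ (∀ s t : V, E s t → ∃ x : 𝒱, s ∈ B x ∧ t ∈ B x) ∧
    ∀ s : V, (T.induce {x : 𝒱 | s ∈ B x}).Connected

/-- A nice (rooted) tree decomposition: every leaf has a singleton bag, every vertex
is the bag of some leaf, and along every tree edge one bag is obtained from the other
by adding exactly one vertex. -/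
def IsNiceTD {V : Type u} {𝒱 : Type v} [DecidableEq V] (E : V → V → Prop)
    (T : SimpleGraph 𝒱) (B : 𝒱 → Finset V) (root : 𝒱) : Prop :=
  IsTreeDecomp E T B ∧
  (∀ x : 𝒱, IsTreeLeaf T x → ∃ s : V, B x = {s}) ∧
  (∀ s : V, ∃ x : 𝒱, IsTreeLeaf T x ∧ B x = {s}) ∧
  ∀ x y : 𝒱, T.Adj x y →
    (∃ s : V, s ∉ B x ∧ B y = insert s (B x)) ∨ (∃ s : V, s ∉ B y ∧ B x = insert s (B y))

/-- A depth-first traversal `vs 1, …, vs ℓ` of the rooted tree `T`: it starts and ends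
at the root, consecutive nodes are adjacent, and every oriented edge of `T` occurs
exactly once among consecutive pairs. -/
structure IsDFT {𝒱 : Type v} (T : SimpleGraph 𝒱) (root : 𝒱) (ℓ : ℕ) (vs : ℕ → 𝒱) :
    Prop where
  one_le : 1 ≤ ℓ
  first : vs 1 = root
  last : vs ℓ = root
  adj : ∀ j : ℕ, 1 ≤ j → j < ℓ → T.Adj (vs j) (vs (j + 1))
  once : ∀ a b : 𝒱, T.Adj a b → ∃! j : ℕ, 1 ≤ j ∧ j < ℓ ∧ vs j = a ∧ vs (j + 1) = b

/-- `x` is an ancestor of `y` (w.r.t. `root`): `x` lies on the path from the root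
to `y`.  (In a tree the path between two nodes is unique.) -/
def Anc {𝒱 : Type v} (T : SimpleGraph 𝒱) (root x y : 𝒱) : Prop :=
  ∀ p : T.Walk root y, p.IsPath → x ∈ p.support

/-- `Θ_i`: the set of ancestors of `vs i`. -/
def Theta {𝒱 : Type v} (T : SimpleGraph 𝒱) (root : 𝒱) (vs : ℕ → 𝒱) (i : ℕ) : Set 𝒱 :=
  {x | Anc T root x (vs i)}

/-- `Θ_{≤ i} = ⋃_{1 ≤ j ≤ i} Θ_j`. -/
def ThetaLe {𝒱 : Type v} (T : SimpleGraph 𝒱) (root : 𝒱) (vs : ℕ → 𝒱) (i : ℕ) : Set 𝒱 :=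
  {x | ∃ j : ℕ, 1 ≤ j ∧ j ≤ i ∧ x ∈ Theta T root vs j}

/-- `Ψ_i = ⋃_{x ∈ Θ_i} B x`. -/
def Psi {V : Type u} {𝒱 : Type v} (T : SimpleGraph 𝒱) (root : 𝒱) (vs : ℕ → 𝒱)
    (B : 𝒱 → Finset V) (i : ℕ) : Set V :=
  {s | ∃ x ∈ Theta T root vs i, s ∈ B x}

/-- `Ψ_{≤ i} = ⋃_{1 ≤ j ≤ i} Ψ_j`. -/
def PsiLe {V : Type u} {𝒱 : Type v} (T : SimpleGraph 𝒱) (root : 𝒱) (vs : ℕ → 𝒱)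
    (B : 𝒱 → Finset V) (i : ℕ) : Set V :=
  {s | ∃ j : ℕ, 1 ≤ j ∧ j ≤ i ∧ s ∈ Psi T root vs B j}

/-- `x = n_i(w)`: `x` is the lowest ancestor of `w` belonging to `Θ_{≤ i}`. -/
def LowestAnc {𝒱 : Type v} (T : SimpleGraph 𝒱) (root : 𝒱) (vs : ℕ → 𝒱) (i : ℕ)
    (w x : 𝒱) : Prop :=
  Anc T root x w ∧ x ∈ ThetaLe T root vs i ∧
    ∀ y : 𝒱, Anc T root y w → y ∈ ThetaLe T root vs i → Anc T root y x

/-- `r = r(s)`: the node of `𝒯^s = {x | s ∈ B x}` closest to the root. -/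
def IsBagRoot {V : Type u} {𝒱 : Type v} (T : SimpleGraph 𝒱) (root : 𝒱)
    (B : 𝒱 → Finset V) (s : V) (r : 𝒱) : Prop :=
  s ∈ B r ∧ ∀ x : 𝒱, s ∈ B x → Anc T root r x

/-- `Ψ_{> i-1}(x) = {s ∈ Ψ_{> i-1} | n_i(s) = x}`, where `n_i(s) = n_i(r(s))`. -/
def PsiGtAt {V : Type u} {𝒱 : Type v} (T : SimpleGraph 𝒱) (root : 𝒱) (vs : ℕ → 𝒱)
    (B : 𝒱 → Finset V) (i : ℕ) (x : 𝒱) : Set V :=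
  {s | s ∉ PsiLe T root vs B (i - 1) ∧
    ∃ r : 𝒱, IsBagRoot T root B s r ∧ LowestAnc T root vs i r x}

/-! Let `r(s)` be the node closest to the root whose bag contains `s`, and let `z` be a node
whose bag contains both ends of the edge `s t`; the ancestors of `z` form a chain containing
`r(s)`, `n_i(s)` and `r(t)`. If `t ∈ Ψ_{≤ i-1}`, then `n_i(s)` separates `z` from a node of
`Θ_{≤ i-1}` whose bag contains `t`, so `t ∈ 𝐓(n_i(s))` because `𝒯^t` is connected. Otherwise
compare `r(t)` with `n_i(s)`: if `r(t)` lies above, `n_i(s)` separates `r(t)` from `z` and again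
`t ∈ 𝐓(n_i(s))`; if below, `n_i(r(t)) = n_i(s)`, since the only node of `Θ_{≤ i}` outside
`Θ_{≤ i-1}` is `v_i`. -/

open SimpleGraph

section RootedTree

variable {𝒱 : Type v} {T : SimpleGraph 𝒱} {root a b c w x y z : 𝒱}

theorem Anc.refl : Anc T root x x :=
  fun p _ => p.end_mem_support

theorem Anc.trans (hxy : Anc T root x y) (hyz : Anc T root y z) : Anc T root x z := by
  classical
  intro p hp
  have hy := hyz p hp
  exact p.support_takeUntil_subset_support hy (hxy _ (hp.takeUntil hy))

theorem Anc.eq_root (h : Anc T root x root) : x = root := by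
  simpa using h .nil .nil

theorem anc_iff_mem_support (hT : T.IsAcyclic) {p : T.Walk root y} (hp : p.IsPath) :
    Anc T root x y ↔ x ∈ p.support :=
  ⟨fun h => h p hp, fun h q hq => by
    rwa [Subtype.mk.inj (hT.subsingleton_path root y |>.elim ⟨q, hq⟩ ⟨p, hp⟩)]⟩

theorem anc_of_mem_support_append (hT : T.IsAcyclic) {p : T.Walk root x} {q : T.Walk x z}
    (hpq : (p.append q).IsPath) (hy : y ∈ q.support) : Anc T root x y := by
  obtain ⟨q₁, q₂, rfl⟩ := q.mem_support_iff_exists_append.1 hy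
  rw [Walk.append_assoc] at hpq
  exact (anc_iff_mem_support hT hpq.of_append_left).2 (by simp)

theorem Anc.antisymm (hT : T.IsTree) (hxy : Anc T root x y) (hyx : Anc T root y x) :
    x = y := by
  obtain ⟨p, hp, -⟩ := hT.existsUnique_path root y
  obtain ⟨q, r, hq, -, rfl⟩ := hp.mem_support_iff_exists_append.1 (hxy p hp)
  by_contra hne
  exact hp.ne_of_mem_support_of_append (Ne.symm hne) (hyx q hq) r.end_mem_support rfl

theorem Anc.total (hT : T.IsTree) (hxz : Anc T root x z) (hyz : Anc T root y z) :
    Anc T root x y ∨ Anc T root y x := by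
  obtain ⟨p, hp, -⟩ := hT.existsUnique_path root z
  obtain ⟨q, r, hq, -, rfl⟩ := hp.mem_support_iff_exists_append.1 (hxz p hp)
  rcases (Walk.mem_support_append_iff _ _).1 (hyz _ hp) with hy | hy
  · exact .inr ((anc_iff_mem_support hT.isAcyclic hq).2 hy)
  · exact .inl (anc_of_mem_support_append hT.isAcyclic hp hy)

/-- For a tree edge `a c`, either `c` is the parent of `a`, or `a` is the parent of `c`. -/
theorem anc_or_forall_anc_iff_of_adj (hT : T.IsTree) (h : T.Adj a c) :
    Anc T root c a ∨ ∀ w, Anc T root w c ↔ Anc T root w a ∨ w = c := by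
  obtain ⟨p, hp, -⟩ := hT.existsUnique_path root a
  by_cases hc : c ∈ p.support
  · exact .inl ((anc_iff_mem_support hT.isAcyclic hp).2 hc)
  · refine .inr fun w => ?_
    rw [anc_iff_mem_support hT.isAcyclic (hp.concat hc h), anc_iff_mem_support hT.isAcyclic hp,
      Walk.support_concat, List.mem_append, List.mem_singleton]

theorem Anc.anc_of_adj (hT : T.IsTree) (hw : Anc T root w b) (h : T.Adj a b) (hne : w ≠ b) :
    Anc T root w a := by
  rcases anc_or_forall_anc_iff_of_adj hT h with hba | hb
  · exact hw.trans hba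
  · exact ((hb w).1 hw).resolve_right hne

theorem Anc.dist_lt (h : T.Reachable root y) (hxy : Anc T root x y) (hne : x ≠ y) :
    T.dist root x < T.dist root y := by
  obtain ⟨p, hp, hlen⟩ := h.exists_path_of_dist
  obtain ⟨q, r, rfl⟩ := Walk.mem_support_iff_exists_append.1 (hxy p hp)
  have hr : r.length ≠ 0 := fun h0 => hne (Walk.eq_of_length_eq_zero h0)
  have := dist_le q
  rw [Walk.length_append] at hlen
  omega

theorem Anc.reroot_of_not_anc (hxz : Anc T root x z) (hxy : ¬ Anc T root x y) :
    Anc T y x z := by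
  classical
  intro p hp
  simp only [Anc, not_forall] at hxy
  obtain ⟨q, hq, hxq⟩ := hxy
  have := (q.append p).support_bypass_subset_support (hxz _ (q.append p).bypass_isPath)
  exact ((Walk.mem_support_append_iff _ _).1 this).resolve_left hxq

theorem Anc.reroot_of_anc (hT : T.IsTree) (hxz : Anc T root x z)
    (hxy : Anc T root x y) (hlca : ∀ w, Anc T root w y → Anc T root w z → Anc T root w x) :
    Anc T y x z := by
  obtain ⟨py, hpy, -⟩ := hT.existsUnique_path root y
  obtain ⟨a, b, -, hb, rfl⟩ := hpy.mem_support_iff_exists_append.1 (hxy _ hpy)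
  obtain ⟨pz, hpz, -⟩ := hT.existsUnique_path root z
  obtain ⟨a', c, -, hc, rfl⟩ := hpz.mem_support_iff_exists_append.1 (hxz _ hpz)
  -- the paths `x → y` and `x → z` meet only in `x`, since a common vertex would be a common
  -- ancestor of `y` and `z` below `x`
  have hbc : (b.reverse.append c).IsPath := by
    rw [Walk.isPath_def, Walk.support_append, List.nodup_append]
    refine ⟨hb.reverse.support_nodup, hc.support_nodup.sublist (List.tail_sublist _), ?_⟩
    rintro v hvb _ hvc rfl
    rw [Walk.support_reverse, List.mem_reverse] at hvb
    have hvy : Anc T root v y :=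
      (anc_iff_mem_support hT.isAcyclic hpy).2 ((Walk.mem_support_append_iff _ _).2 (.inr hvb))
    have hvz : Anc T root v z := (anc_iff_mem_support hT.isAcyclic hpz).2
      ((Walk.mem_support_append_iff _ _).2 (.inr (List.mem_of_mem_tail hvc)))
    obtain rfl : v = x :=
      (hlca v hvy hvz).antisymm hT (anc_of_mem_support_append hT.isAcyclic hpy hvb)
    have hnd := hc.support_nodup
    rw [← Walk.cons_tail_support] at hnd
    exact (List.nodup_cons.1 hnd).1 hvc
  exact (anc_iff_mem_support hT.isAcyclic hbc).2 (by simp)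

theorem Anc.reroot (hxz : Anc T root x z) (hT : T.IsTree)
    (hlca : ∀ w, Anc T root w y → Anc T root w z → Anc T root w x) : Anc T y x z := by
  by_cases hxy : Anc T root x y
  · exact hxz.reroot_of_anc hT hxy hlca
  · exact hxz.reroot_of_not_anc hxy

theorem Anc.mem_of_preconnected_induce {S : Set 𝒱} (hS : (T.induce S).Preconnected)
    (hy : y ∈ S) (hz : z ∈ S) (hx : Anc T y x z) : x ∈ S := by
  classical
  obtain ⟨W⟩ := hS ⟨y, hy⟩ ⟨z, hz⟩
  let p := W.map (Embedding.induce S).toHom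
  have hp : x ∈ p.support := p.support_bypass_subset_support (hx _ p.bypass_isPath)
  obtain ⟨v, -, rfl⟩ := List.mem_map.1 (Walk.support_map _ _ ▸ hp)
  exact v.2

theorem exists_anc_forall_mem (hT : T.IsTree) (root : 𝒱) {S : Set 𝒱}
    (hS : (T.induce S).Preconnected) (hz : z ∈ S) : ∃ r ∈ S, ∀ x ∈ S, Anc T root r x := by
  obtain ⟨r, hrS, hmin⟩ := (measure (T.dist root)).wf.has_min S ⟨z, hz⟩
  refine ⟨r, hrS, fun x hx => ?_⟩
  -- the node `r ∈ S` nearest to the root stays an ancestor along every edge inside `S`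
  have step {a c : 𝒱} (hra : Anc T root r a) (hac : T.Adj a c) (hc : c ∈ S) :
      Anc T root r c := by
    rcases anc_or_forall_anc_iff_of_adj hT hac with hca | hc'
    · rcases hra.total hT hca with hrc | hcr
      · exact hrc
      · by_cases hcr' : c = r
        · exact hcr' ▸ Anc.refl
        · exact absurd (hcr.dist_lt (hT.connected root r) hcr') (hmin c hc)
    · exact (hc' r).2 (.inl hra)
  obtain ⟨W⟩ := hS ⟨r, hrS⟩ ⟨x, hx⟩
  suffices ∀ {a b : S} (W : (T.induce S).Walk a b), Anc T root r a → Anc T root r b from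
    this W Anc.refl
  intro a b W
  induction W with
  | nil => exact id
  | cons h _ ih => exact fun hra => ih (step hra h (Subtype.prop _))

end RootedTree

section Traversal

variable {𝒱 : Type v} {T : SimpleGraph 𝒱} {root : 𝒱} {ℓ : ℕ} {vs : ℕ → 𝒱} {i : ℕ}
  {u u' w x y : 𝒱}

theorem mem_thetaLe_of_anc (hwy : Anc T root w y) (hy : y ∈ ThetaLe T root vs i) :
    w ∈ ThetaLe T root vs i :=
  let ⟨j, hj1, hji, hy⟩ := hy
  ⟨j, hj1, hji, hwy.trans hy⟩

theorem thetaLe_mono {j : ℕ} (h : i ≤ j) : ThetaLe T root vs i ⊆ ThetaLe T root vs j :=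
  fun _ ⟨k, hk1, hki, hk⟩ => ⟨k, hk1, hki.trans h, hk⟩

theorem IsDFT.eq_of_mem_thetaLe_of_not_mem (hT : T.IsTree) (hdft : IsDFT T root ℓ vs)
    (hi : i ≤ ℓ) (hw : w ∈ ThetaLe T root vs i) (hw' : w ∉ ThetaLe T root vs (i - 1)) :
    w = vs i := by
  obtain ⟨j, hj1, hji, hwj⟩ := hw
  obtain rfl : j = i := by
    by_contra h
    exact hw' ⟨j, hj1, by omega, hwj⟩
  by_contra hne
  rcases Nat.lt_or_ge j 2 with hj | hj
  · obtain rfl : j = 1 := by omega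
    have hw_root : Anc T root w root := hdft.first ▸ hwj
    exact hne (hw_root.eq_root.trans hdft.first.symm)
  · have hadj := hdft.adj (j - 1) (by omega) (by omega)
    rw [Nat.sub_add_cancel hj1] at hadj
    exact hw' ⟨j - 1, by omega, le_rfl, hwj.anc_of_adj hT hadj hne⟩

theorem LowestAnc.of_anc_of_anc (h : LowestAnc T root vs i u x) (hxu' : Anc T root x u')
    (hu'u : Anc T root u' u) : LowestAnc T root vs i u' x :=
  ⟨hxu', h.2.1, fun y hy hyθ => h.2.2 y (hy.trans hu'u) hyθ⟩

theorem IsDFT.lowestAnc_of_anc (hT : T.IsTree) (hdft : IsDFT T root ℓ vs) (hi : i ≤ ℓ)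
    (h : LowestAnc T root vs i u x) (hu : u ∉ ThetaLe T root vs (i - 1))
    (huu' : Anc T root u u') : LowestAnc T root vs i u' x := by
  refine ⟨h.1.trans huu', h.2.1, fun y hyu' hy => ?_⟩
  rcases hyu'.total hT huu' with hyu | huy
  · exact h.2.2 y hyu hy
  · have hu_i := hdft.eq_of_mem_thetaLe_of_not_mem hT hi (mem_thetaLe_of_anc huy hy) hu
    have hy_i := hdft.eq_of_mem_thetaLe_of_not_mem hT hi hy
      fun hy' => hu (mem_thetaLe_of_anc huy hy')
    obtain rfl : y = u := hy_i.trans hu_i.symm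
    exact h.2.2 y Anc.refl hy

end Traversal

section TreeDecomposition

variable {V : Type u} {𝒱 : Type v} {E : V → V → Prop} {T : SimpleGraph 𝒱} {B : 𝒱 → Finset V}
  {root : 𝒱} {ℓ : ℕ} {vs : ℕ → 𝒱} {i : ℕ} {r x y z : 𝒱} {s t : V}

theorem IsTreeDecomp.mem_bag_of_anc (hTD : IsTreeDecomp E T B) (hy : s ∈ B y) (hz : s ∈ B z)
    (hx : Anc T y x z) : s ∈ B x :=
  hx.mem_of_preconnected_induce (S := {x | s ∈ B x}) (hTD.2.2 s).preconnected hy hz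

theorem IsTreeDecomp.exists_isBagRoot (hTD : IsTreeDecomp E T B) (root : 𝒱) (hz : s ∈ B z) :
    ∃ r, IsBagRoot T root B s r :=
  let ⟨r, hr, hmin⟩ :=
    exists_anc_forall_mem (S := {x | s ∈ B x}) hTD.1 root (hTD.2.2 s).preconnected hz
  ⟨r, hr, hmin⟩

theorem mem_psiLe_of_mem_thetaLe (hs : s ∈ B r) (hr : r ∈ ThetaLe T root vs i) :
    s ∈ PsiLe T root vs B i :=
  let ⟨j, hj1, hji, hrj⟩ := hr
  ⟨j, hj1, hji, r, hrj, hs⟩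

theorem IsTreeDecomp.mem_psiGtAt_or_mem_bag (hTD : IsTreeDecomp E T B)
    (hdft : IsDFT T root ℓ vs) (hi : i ≤ ℓ) (hs : s ∈ B z) (ht : t ∈ B z)
    (hsx : s ∈ PsiGtAt T root vs B i x) : t ∈ PsiGtAt T root vs B i x ∪ ↑(B x) := by
  have hT := hTD.1
  obtain ⟨hsψ, rs, hrs, hlow⟩ := hsx
  have hrsz : Anc T root rs z := hrs.2 z hs
  have hxz : Anc T root x z := hlow.1.trans hrsz
  have hrsθ : rs ∉ ThetaLe T root vs (i - 1) := mt (mem_psiLe_of_mem_thetaLe hrs.1) hsψ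
  by_cases htψ : t ∈ PsiLe T root vs B (i - 1)
  · right
    obtain ⟨j, hj1, hji, y, hy, hty⟩ := htψ
    refine hTD.mem_bag_of_anc hty ht (hxz.reroot hT fun w hwy hwz => ?_)
    have hwθ : w ∈ ThetaLe T root vs (i - 1) := ⟨j, hj1, hji, hwy.trans hy⟩
    rcases hwz.total hT hrsz with hwrs | hrsw
    · exact hlow.2.2 w hwrs (thetaLe_mono (Nat.sub_le i 1) hwθ)
    · exact absurd (mem_thetaLe_of_anc hrsw hwθ) hrsθ
  · obtain ⟨rt, hrt⟩ := hTD.exists_isBagRoot root ht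
    have hrtz : Anc T root rt z := hrt.2 z ht
    rcases hxz.total hT hrtz with hxrt | hrtx
    · refine .inl ⟨htψ, rt, hrt, ?_⟩
      rcases hrsz.total hT hrtz with hrsrt | hrtrs
      · exact hdft.lowestAnc_of_anc hT hi hlow hrsθ hrsrt
      · exact hlow.of_anc_of_anc hxrt hrtrs
    · exact .inr <| hTD.mem_bag_of_anc hrt.1 ht <|
        hxz.reroot hT fun w hwrt _ => hwrt.trans hrtx

end TreeDecomposition

theorem psiGt_edge_closure_general {V : Type u} {𝒱 : Type v}
    (E : V → V → Prop) (T : SimpleGraph 𝒱) (B : 𝒱 → Finset V)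
    (hTD : IsTreeDecomp E T B) (root : 𝒱) (ℓ : ℕ) (vs : ℕ → 𝒱)
    (hdft : IsDFT T root ℓ vs)
    (i : ℕ) (hi2 : i ≤ ℓ)
    (x : 𝒱)
    (s t : V) (hE : E s t) :
    (s ∈ PsiGtAt T root vs B i x → t ∈ PsiGtAt T root vs B i x ∪ ↑(B x)) ∧
    (t ∈ PsiGtAt T root vs B i x → s ∈ PsiGtAt T root vs B i x ∪ ↑(B x)) := by
  obtain ⟨z, hsz, htz⟩ := hTD.2.1 s t hE
  exact ⟨hTD.mem_psiGtAt_or_mem_bag hdft hi2 hsz htz,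
    hTD.mem_psiGtAt_or_mem_bag hdft hi2 htz hsz⟩

/-- Every edge of `G` with one end in `Ψ_{>i-1}(x)` has its other
end in `Ψ_{>i-1}(x) ∪ B x`. -/
theorem psiGt_edge_closure {V : Type u} {𝒱 : Type v} [Fintype V] [Fintype 𝒱]
    (E : V → V → Prop) (T : SimpleGraph 𝒱) (B : 𝒱 → Finset V)
    (hTD : IsTreeDecomp E T B) (root : 𝒱) (ℓ : ℕ) (vs : ℕ → 𝒱)
    (hdft : IsDFT T root ℓ vs)
    (i : ℕ) (hi1 : 1 ≤ i) (hi2 : i ≤ ℓ)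
    (x : 𝒱) (hx : x ∈ Theta T root vs i)
    (s t : V) (hE : E s t) :
    (s ∈ PsiGtAt T root vs B i x → t ∈ PsiGtAt T root vs B i x ∪ ↑(B x)) ∧
    (t ∈ PsiGtAt T root vs B i x → s ∈ PsiGtAt T root vs B i x ∪ ↑(B x)) :=
  psiGt_edge_closure_general E T B hTD root ℓ vs hdft i hi2 x s t hE
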